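/- Let $d > 2$, $c > 0$, $1 < q < \infty$ with conjugate exponent $q'$. There is a constant $C$ such that for all $x \geq 1$: $x \int_0^1 |k(\lambda x)|\, \lambda^{2d-2-d/q}\,d\lambda \leq C x^{2-d-d/q'}$, where $k(r) \simeq r^{2-d}$ for $0 < r < 1$ and $k(r) \simeq r^{(1-d)/2}e^{-r}$ for $r \geq 1$. More precisely, if $k: (0,\infty) \to (0,\infty)$ satisfies $k(r) \leq A r^{2-d}$ for $r < 1$ and $k(r) \leq A r^{(1-d)/2}e^{-r}$ for $r \geq 1$, then the stated bound holds with $C$ depending only on $A, d, q$. -/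

import Mathlib

open MeasureTheory Set intervalIntegral

theorem stmt_11 (d q A : ℝ) (hd : 2 < d) (hq : 1 < q) (hA : 0 < A) :
    ∃ C > 0, ∀ k : ℝ → ℝ,
      (∀ r : ℝ, 0 < r → r < 1 → k r ≤ A * r ^ (2 - d)) →
      (∀ r : ℝ, 1 ≤ r → k r ≤ A * r ^ ((1 - d) / 2) * Real.exp (-r)) →
      (∀ r : ℝ, 0 < r → 0 < k r) →
      ∀ x : ℝ, 1 ≤ x →
        x * ∫ lam in (0 : ℝ)..1, |k (lam * x)| * lam ^ (2 * d - 2 - d / q) ≤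
          C * x ^ (2 - d - d / (q / (q - 1))) := by
  have hd0 : (0:ℝ) < d := by linarith
  have hq0 : (0:ℝ) < q := by linarith
  have hdq : d / q < d := by rw [div_lt_iff₀ hq0]; nlinarith
  have hdqpos : 0 < d / q := div_pos hd0 hq0
  set a : ℝ := 2 * d - 2 - d / q with ha
  have ha0 : 0 < a := by simp only [ha]; linarith
  set p : ℝ := d - d / q with hp
  have hp0 : 0 < p := by simp only [hp]; linarith
  set m : ℝ := a + 2 with hm
  set s : ℝ := m + (1 - d) / 2 with hs
  set n : ℕ := ⌈s⌉₊ with hn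
  have hfact : (0:ℝ) < (n.factorial : ℝ) := by positivity
  refine ⟨A / (p + 1) + A * n.factorial, by positivity, ?_⟩
  intro k hk1 hk2 hkpos x hx
  have hx0 : 0 < x := by linarith
  have hexp : 2 - d - d / (q / (q - 1)) = -a := by
    have h1 : q - 1 ≠ 0 := ne_of_gt (by linarith)
    have h2 : q ≠ 0 := ne_of_gt hq0
    rw [ha]
    field_simp
    ring
  rw [hexp]
  have hrpos : 0 < x ^ (-a) := Real.rpow_pos_of_pos hx0 _
  by_cases hInt : IntervalIntegrable (fun lam => |k (lam * x)| * lam ^ a) volume 0 1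
  swap
  · rw [intervalIntegral.integral_undef hInt, mul_zero]
    positivity
  -- split point
  have hix : (0:ℝ) < 1 / x := by positivity
  have hix1 : 1 / x ≤ 1 := by rw [div_le_one hx0]; exact hx
  have hixx : (1 / x) * x = 1 := one_div_mul_cancel (ne_of_gt hx0)
  have hI1 : IntervalIntegrable (fun lam => |k (lam * x)| * lam ^ a) volume 0 (1 / x) :=
    hInt.mono_set (uIcc_subset_uIcc left_mem_uIcc (by
      rw [uIcc_of_le zero_le_one]; exact ⟨le_of_lt hix, hix1⟩))
  have hI2 : IntervalIntegrable (fun lam => |k (lam * x)| * lam ^ a) volume (1 / x) 1 :=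
    hInt.mono_set (uIcc_subset_uIcc (by
      rw [uIcc_of_le zero_le_one]; exact ⟨le_of_lt hix, hix1⟩) right_mem_uIcc)
  have hg1int : IntervalIntegrable (fun lam : ℝ => A * x ^ (2 - d) * lam ^ p) volume 0 (1 / x) :=
    (intervalIntegral.intervalIntegrable_rpow' (by linarith : (-1:ℝ) < p)).const_mul _
  have hg2int : IntervalIntegrable (fun lam : ℝ => A * n.factorial * x ^ (-m) * lam ^ (-2 : ℝ))
      volume (1 / x) 1 := by
    refine (intervalIntegral.intervalIntegrable_rpow (Or.inr ?_)).const_mul _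
    rw [uIcc_of_le hix1]
    intro h; exact absurd h.1 (not_le.mpr hix)
  -- pointwise bound on [0, 1/x]
  have hpt1 : ∀ lam ∈ Icc (0:ℝ) (1 / x),
      |k (lam * x)| * lam ^ a ≤ A * x ^ (2 - d) * lam ^ p := by
    intro lam ⟨hl0, hl1⟩
    rcases eq_or_lt_of_le hl0 with h0 | h0
    · rw [← h0, Real.zero_rpow (ne_of_gt ha0), mul_zero]
      have : (0:ℝ) ^ p = 0 := Real.zero_rpow (ne_of_gt hp0)
      rw [this, mul_zero]
    · have ht0 : 0 < lam * x := mul_pos h0 hx0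
      have ht1 : lam * x ≤ 1 := by
        calc lam * x ≤ (1 / x) * x := by gcongr
          _ = 1 := hixx
      have hkt : k (lam * x) ≤ A * (lam * x) ^ (2 - d) := by
        rcases lt_or_eq_of_le ht1 with h | h
        · exact hk1 _ ht0 h
        · rw [h, Real.one_rpow, mul_one]
          calc k 1 ≤ A * 1 ^ ((1 - d) / 2) * Real.exp (-1) := hk2 1 le_rfl
            _ = A * Real.exp (-1) := by rw [Real.one_rpow, mul_one]
            _ ≤ A * 1 := by
                gcongr
                exact le_of_lt (Real.exp_lt_one_iff.mpr (by norm_num))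
            _ = A := mul_one A
      calc |k (lam * x)| * lam ^ a = k (lam * x) * lam ^ a := by
            rw [abs_of_pos (hkpos _ ht0)]
        _ ≤ A * (lam * x) ^ (2 - d) * lam ^ a :=
            mul_le_mul_of_nonneg_right hkt (Real.rpow_nonneg (le_of_lt h0) a)
        _ = A * x ^ (2 - d) * (lam ^ (2 - d) * lam ^ a) := by
            rw [Real.mul_rpow (le_of_lt h0) (le_of_lt hx0)]; ring
        _ = A * x ^ (2 - d) * lam ^ ((2 - d) + a) := by rw [Real.rpow_add h0]
        _ = A * x ^ (2 - d) * lam ^ p := by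
            congr 1
            rw [ha, hp]; ring
  -- pointwise bound on [1/x, 1]
  have hpt2 : ∀ lam ∈ Icc (1 / x) (1:ℝ),
      |k (lam * x)| * lam ^ a ≤ A * n.factorial * x ^ (-m) * lam ^ (-2 : ℝ) := by
    intro lam ⟨hl0, hl1⟩
    have hlpos : 0 < lam := lt_of_lt_of_le hix hl0
    have ht1 : 1 ≤ lam * x := by
      calc (1:ℝ) = (1 / x) * x := hixx.symm
        _ ≤ lam * x := by gcongr
    have ht0 : 0 < lam * x := lt_of_lt_of_le one_pos ht1
    have hts : (lam * x) ^ ((1 - d) / 2) = (lam * x) ^ s * (lam * x) ^ (-m) := by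
      rw [← Real.rpow_add ht0]
      congr 1
      rw [hs]; ring
    have htn : (lam * x) ^ s * Real.exp (-(lam * x)) ≤ n.factorial := by
      have h1 : (lam * x) ^ s ≤ (lam * x) ^ (n:ℝ) :=
        Real.rpow_le_rpow_of_exponent_le ht1 (Nat.le_ceil s)
      have h2 : (lam * x) ^ (n:ℝ) = (lam * x) ^ n := Real.rpow_natCast _ n
      have h3 : (lam * x) ^ n ≤ n.factorial * Real.exp (lam * x) := by
        have := Real.pow_div_factorial_le_exp _ (le_of_lt ht0) n
        rw [div_le_iff₀ hfact] at this
        linarith [this]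
      have h4 : (lam * x) ^ s ≤ (n.factorial : ℝ) * Real.exp (lam * x) := by
        rw [h2] at h1; exact h1.trans h3
      calc (lam * x) ^ s * Real.exp (-(lam * x))
          ≤ ((n.factorial : ℝ) * Real.exp (lam * x)) * Real.exp (-(lam * x)) :=
            mul_le_mul_of_nonneg_right h4 (le_of_lt (Real.exp_pos _))
        _ = n.factorial := by
            rw [mul_assoc, ← Real.exp_add, add_neg_cancel, Real.exp_zero, mul_one]
    have hkt : k (lam * x) ≤ A * n.factorial * (lam * x) ^ (-m) := by
      calc k (lam * x) ≤ A * (lam * x) ^ ((1 - d) / 2) * Real.exp (-(lam * x)) :=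
            hk2 _ ht1
        _ = A * ((lam * x) ^ s * Real.exp (-(lam * x))) * (lam * x) ^ (-m) := by
            rw [hts]; ring
        _ ≤ A * n.factorial * (lam * x) ^ (-m) :=
            mul_le_mul_of_nonneg_right (mul_le_mul_of_nonneg_left htn (le_of_lt hA))
              (Real.rpow_nonneg (le_of_lt ht0) _)
    calc |k (lam * x)| * lam ^ a = k (lam * x) * lam ^ a := by
          rw [abs_of_pos (hkpos _ ht0)]
      _ ≤ A * n.factorial * (lam * x) ^ (-m) * lam ^ a :=
          mul_le_mul_of_nonneg_right hkt (Real.rpow_nonneg (le_of_lt hlpos) a)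
      _ = A * n.factorial * x ^ (-m) * (lam ^ (-m) * lam ^ a) := by
          rw [Real.mul_rpow (le_of_lt hlpos) (le_of_lt hx0)]; ring
      _ = A * n.factorial * x ^ (-m) * lam ^ (-m + a) := by rw [Real.rpow_add hlpos]
      _ = A * n.factorial * x ^ (-m) * lam ^ (-2 : ℝ) := by
          congr 1
          rw [hm]; ring
  -- integral values of the bounding functions
  have hval1 : ∫ lam in (0:ℝ)..(1 / x), A * x ^ (2 - d) * lam ^ p
      = A * x ^ (2 - d) * ((1 / x) ^ (p + 1) / (p + 1)) := by
    rw [intervalIntegral.integral_const_mul, integral_rpow (Or.inl (by linarith))]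
    rw [Real.zero_rpow (by positivity : p + 1 ≠ 0)]
    ring
  have hval2 : ∫ lam in (1 / x : ℝ)..1, A * n.factorial * x ^ (-m) * lam ^ (-2 : ℝ)
      = A * n.factorial * x ^ (-m) * (x - 1) := by
    rw [intervalIntegral.integral_const_mul, integral_rpow (Or.inr ⟨by norm_num, ?_⟩)]
    · have e : ((1:ℝ) ^ ((-2:ℝ) + 1) - (1 / x) ^ ((-2:ℝ) + 1)) / ((-2:ℝ) + 1) = x - 1 := by
        rw [show ((-2:ℝ) + 1) = -1 by norm_num, Real.rpow_neg_one, Real.rpow_neg_one]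
        rw [one_div, inv_inv, inv_one]
        ring
      rw [e]
    · rw [uIcc_of_le hix1]
      intro h; exact absurd h.1 (not_le.mpr hix)
  -- combine
  have hsplit : ∫ lam in (0:ℝ)..1, |k (lam * x)| * lam ^ a
      = (∫ lam in (0:ℝ)..(1 / x), |k (lam * x)| * lam ^ a)
        + ∫ lam in (1 / x : ℝ)..1, |k (lam * x)| * lam ^ a :=
    (intervalIntegral.integral_add_adjacent_intervals hI1 hI2).symm
  have hb1 : (∫ lam in (0:ℝ)..(1 / x), |k (lam * x)| * lam ^ a)
      ≤ A * x ^ (2 - d) * ((1 / x) ^ (p + 1) / (p + 1)) := by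
    rw [← hval1]
    exact intervalIntegral.integral_mono_on (le_of_lt hix) hI1 hg1int hpt1
  have hb2 : (∫ lam in (1 / x : ℝ)..1, |k (lam * x)| * lam ^ a)
      ≤ A * n.factorial * x ^ (-m) * (x - 1) := by
    rw [← hval2]
    exact intervalIntegral.integral_mono_on hix1 hI2 hg2int hpt2
  -- final power computation
  have e1 : (1 / x) ^ (p + 1) = x ^ (-(p + 1)) := by
    rw [one_div, ← Real.rpow_neg_one x, ← Real.rpow_mul (le_of_lt hx0)]
    congr 1; ring
  have e2 : x ^ (2 - d) * x ^ (-(p + 1)) * x = x ^ (-a) := by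
    rw [← Real.rpow_add hx0, ← Real.rpow_add_one (ne_of_gt hx0)]
    congr 1
    rw [hp, ha]; ring
  have hpow1 : x * (A * x ^ (2 - d) * ((1 / x) ^ (p + 1) / (p + 1)))
      = A / (p + 1) * x ^ (-a) := by
    rw [e1, ← e2]
    field_simp
  have e3 : x ^ (-m) * x * x = x ^ (-a) := by
    rw [← Real.rpow_add_one (ne_of_gt hx0), ← Real.rpow_add_one (ne_of_gt hx0)]
    congr 1
    rw [hm]; ring
  have hpow2 : x * (A * n.factorial * x ^ (-m) * (x - 1))
      ≤ A * n.factorial * x ^ (-a) := by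
    rw [← e3]
    have hxm : (0:ℝ) ≤ x ^ (-m) := Real.rpow_nonneg (le_of_lt hx0) _
    nlinarith [mul_pos (mul_pos hA hfact) (mul_pos (Real.rpow_pos_of_pos hx0 (-m)) hx0)]
  calc x * ∫ lam in (0:ℝ)..1, |k (lam * x)| * lam ^ a
      = x * ((∫ lam in (0:ℝ)..(1 / x), |k (lam * x)| * lam ^ a)
        + ∫ lam in (1 / x : ℝ)..1, |k (lam * x)| * lam ^ a) := by rw [hsplit]
    _ ≤ x * (A * x ^ (2 - d) * ((1 / x) ^ (p + 1) / (p + 1))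
        + A * n.factorial * x ^ (-m) * (x - 1)) := by
        exact mul_le_mul_of_nonneg_left (add_le_add hb1 hb2) (le_of_lt hx0)
    _ = x * (A * x ^ (2 - d) * ((1 / x) ^ (p + 1) / (p + 1)))
        + x * (A * n.factorial * x ^ (-m) * (x - 1)) := by ring
    _ ≤ A / (p + 1) * x ^ (-a) + A * n.factorial * x ^ (-a) :=
        add_le_add (le_of_eq hpow1) hpow2
    _ = (A / (p + 1) + A * n.factorial) * x ^ (-a) := by ring
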